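/- Let p ≥ 5 be a prime and n a positive integer. Let A' ⊆ 𝔽_p^n be such that every cycle (x_1, …, x_p) ∈ A' × ⋯ × A' has at most k distinct entries. Let B_1, …, B_k be a partition of {1, …, p} into k blocks such that the indices 1 and 2 lie in the same block. Let X_1, …, X_p ⊆ A' be sets such that X_i and X_j are disjoint whenever i and j lie in different blocks. Then every cycle (x_1, …, x_p) ∈ X_1 × ⋯ × X_p satisfies x_1 = x_2. -/

import Mathlib

/-!
Since the sets `X i` from different blocks are disjoint, the block index `B i` is a function of
the entry `x i`. This function maps the set of entries onto all `k` blocks, while by hypothesis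
there are at most `k` entries, so it is a bijection and the entry is also a function of the block.
-/

open Finset

theorem Function.FactorsThrough.swap_of_surjective_of_card_image_le {ι α β : Type*} [Fintype ι]
    [DecidableEq α] [Fintype β] {f : ι → α} {g : ι → β} (hgf : g.FactorsThrough f)
    (hg : g.Surjective) (hcard : #(univ.image f) ≤ Fintype.card β) : f.FactorsThrough g := by
  intro i j hij
  set h : α → β := Function.extend f g (fun _ ↦ g i)
  have hh : ∀ l, h (f l) = g l := hgf.extend_apply _
  have hinj : Set.InjOn h (univ.image f) := by
    refine injOn_of_surjOn_of_card_le h (t := univ) (fun _ _ ↦ mem_coe.2 (mem_univ _)) ?_ hcard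
    intro b _
    obtain ⟨l, rfl⟩ := hg b
    exact ⟨f l, by simp, hh l⟩
  exact hinj (by simp) (by simp) (by rw [hh, hh, hij])

/-- Let `p ≥ 5` be prime and `n ≥ 1`. Let `A' ⊆ 𝔽_p^n` be such that every cycle (p-tuple
summing to zero) `(x_1, …, x_p) ∈ A' × ⋯ × A'` has at most `k` distinct entries. Let
`B : Fin p → Fin k` describe a partition of `{1, …, p}` into `k` blocks (indices `i, j` lie
in the same block iff `B i = B j`) with indices `1` and `2` in the same block, and let
`X_1, …, X_p ⊆ A'` be such that `X_i` and `X_j` are disjoint whenever `i` and `j` lie in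
different blocks. Then every cycle `(x_1, …, x_p) ∈ X_1 × ⋯ × X_p` satisfies `x_1 = x_2`. -/
theorem stmt14 {p n k : ℕ} (hp5 : 5 ≤ p)
    (A' : Set (Fin n → ZMod p))
    (hA' : ∀ x : Fin p → (Fin n → ZMod p), (∀ i, x i ∈ A') → ∑ i, x i = 0 →
      (Finset.image x Finset.univ).card ≤ k)
    (B : Fin p → Fin k) (hB : Function.Surjective B)
    (h12 : B ⟨0, by omega⟩ = B ⟨1, by omega⟩)
    (X : Fin p → Set (Fin n → ZMod p)) (hXA : ∀ i, X i ⊆ A')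
    (hXdisj : ∀ i j, B i ≠ B j → Disjoint (X i) (X j)) :
    ∀ x : Fin p → (Fin n → ZMod p), (∀ i, x i ∈ X i) → ∑ i, x i = 0 →
      x ⟨0, by omega⟩ = x ⟨1, by omega⟩ := by
  intro x hx hsum
  have hBx : B.FactorsThrough x := fun i j hij ↦ by
    by_contra hne
    exact Set.disjoint_left.mp (hXdisj i j hne) (hx i) (hij ▸ hx j)
  refine hBx.swap_of_surjective_of_card_image_le hB ?_ h12
  simpa using hA' x (fun i ↦ hXA i (hx i)) hsum
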